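/- arXiv:1911.07949 — 3 statements merged into one kernel-verified Lean document; each statement's English description precedes it below -/
import Mathlib

section
/- If every parameter q_{ij} is a root of unity, then the quantum polynomial ring ℂ⟨x_0,…,x_n⟩/(x_i x_j − q_{ij} x_j x_i) is a finitely generated module over its center. -/
/-!
The generators of `ℂ⟨x_0,…,x_n⟩/(x_i x_j − q_{ij} x_j x_i)` pairwise `q`-commute, so `x_i ^ N` is
central as soon as every `q_{ij} ^ N = 1`. Left multiplication by a generator moves it into its
place in an ordered monomial `x_0 ^ a_0 ⋯ x_n ^ a_n` at the cost of a scalar, so the ordered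
monomials span the algebra over `ℂ`. Writing each exponent as `a_i = N * (a_i / N) + a_i % N`
pulls a central factor out of every ordered monomial, so the finitely many ordered monomials with
all exponents below `N` span the algebra over its center.
-/

noncomputable section

/-- The defining relations `x_i x_j = q_{ij} x_j x_i` of the quantum polynomial ring
on `n+1` variables with parameters `Q i j`. -/
inductive QPRel {n : ℕ} (Q : Fin (n + 1) → Fin (n + 1) → ℂ) :
    FreeAlgebra ℂ (Fin (n + 1)) → FreeAlgebra ℂ (Fin (n + 1)) → Prop
  | rel (i j : Fin (n + 1)) :
      QPRel Q (FreeAlgebra.ι ℂ i * FreeAlgebra.ι ℂ j)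
        (Q i j • (FreeAlgebra.ι ℂ j * FreeAlgebra.ι ℂ i))

/-- The quantum polynomial ring `ℂ⟨x_0,…,x_n⟩/(x_i x_j − q_{ij} x_j x_i)`. -/
abbrev QuantumPolyRing {n : ℕ} (Q : Fin (n + 1) → Fin (n + 1) → ℂ) : Type :=
  RingQuot (QPRel Q)

open Function

theorem exists_pos_forall_pow_eq_one {ι M : Type*} [Finite ι] [Monoid M] {z : ι → M}
    (h : ∀ i, ∃ k, 0 < k ∧ z i ^ k = 1) : ∃ N, 0 < N ∧ ∀ i, z i ^ N = 1 := by
  have := Fintype.ofFinite ι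
  choose k hk_pos hk using h
  refine ⟨∏ i, k i, Finset.prod_pos fun i _ => hk_pos i, fun i => ?_⟩
  obtain ⟨m, hm⟩ := Finset.dvd_prod_of_mem k (Finset.mem_univ i)
  rw [hm, pow_mul, hk, one_pow]

section OrderedMonomial

variable {ι M : Type*} [Monoid M] (x : ι → M)

def orderedMonomial (l : List ι) (a : ι → ℕ) : M :=
  (l.map fun i => x i ^ a i).prod

variable {x}

@[simp]
theorem orderedMonomial_nil (a : ι → ℕ) : orderedMonomial x [] a = 1 := rfl

@[simp]
theorem orderedMonomial_cons (i : ι) (l : List ι) (a : ι → ℕ) :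
    orderedMonomial x (i :: l) a = x i ^ a i * orderedMonomial x l a := rfl

@[simp]
theorem orderedMonomial_zero (l : List ι) : orderedMonomial x l 0 = 1 := by
  induction l with
  | nil => rfl
  | cons i l ih => simp [ih]

theorem orderedMonomial_update_of_notMem [DecidableEq ι] {l : List ι} {j : ι} (hj : j ∉ l)
    (a : ι → ℕ) (m : ℕ) : orderedMonomial x l (update a j m) = orderedMonomial x l a :=
  congrArg List.prod <| List.map_congr_left fun i hi => by
    rw [update_of_ne (ne_of_mem_of_not_mem hi hj)]

theorem orderedMonomial_mem_center {l : List ι} {a : ι → ℕ}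
    (h : ∀ i ∈ l, x i ^ a i ∈ Submonoid.center M) :
    orderedMonomial x l a ∈ Submonoid.center M :=
  Submonoid.list_prod_mem _ <| by simpa using h

theorem orderedMonomial_add {l : List ι} {a : ι → ℕ}
    (h : ∀ i ∈ l, x i ^ a i ∈ Submonoid.center M) (b : ι → ℕ) :
    orderedMonomial x l (a + b) = orderedMonomial x l a * orderedMonomial x l b := by
  induction l with
  | nil => simp
  | cons i l ih =>
    have hl : ∀ k ∈ l, x k ^ a k ∈ Submonoid.center M := fun k hk => h k (.tail _ hk)
    have hcomm := Submonoid.mem_center_iff.mp (orderedMonomial_mem_center hl) (x i ^ b i)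
    simp only [orderedMonomial_cons, Pi.add_apply, pow_add, ih hl]
    rw [mul_assoc, ← mul_assoc (x i ^ b i), hcomm, mul_assoc, mul_assoc]

theorem exists_mem_center_orderedMonomial_eq_mul {l : List ι} {N : ℕ}
    (hN : ∀ i ∈ l, x i ^ N ∈ Submonoid.center M) (a : ι → ℕ) :
    ∃ c ∈ Submonoid.center M,
      orderedMonomial x l a = c * orderedMonomial x l (fun i => a i % N) := by
  have hpow : ∀ i ∈ l, x i ^ (N * (a i / N)) ∈ Submonoid.center M := fun i hi => by
    rw [pow_mul]; exact pow_mem (hN i hi) _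
  refine ⟨_, orderedMonomial_mem_center hpow, ?_⟩
  rw [← orderedMonomial_add hpow]
  congr 1
  ext i
  exact (Nat.div_add_mod (a i) N).symm

end OrderedMonomial

section SkewCommuting

variable {R A ι : Type*} [CommSemiring R] [Semiring A] [Algebra R A]

theorem mul_pow_eq_smul_pow_mul {a b : A} {q : R} (h : a * b = q • (b * a)) (m : ℕ) :
    a * b ^ m = q ^ m • (b ^ m * a) := by
  induction m with
  | zero => simp
  | succ m ih =>
    rw [pow_succ', ← mul_assoc, h, smul_mul_assoc, mul_assoc, ih, mul_smul_comm, smul_smul,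
      ← mul_assoc, ← pow_succ', ← pow_succ']

variable {x : ι → A} {q : ι → ι → R}

theorem pow_mem_center_of_skewCommute (hx : ∀ i j, x i * x j = q i j • (x j * x i))
    (hgen : Algebra.adjoin R (Set.range x) = ⊤) {N : ℕ} (hq : ∀ i j, q i j ^ N = 1) (i : ι) :
    x i ^ N ∈ Subalgebra.center R A := by
  refine Subalgebra.mem_center_iff.mpr fun b => ?_
  refine (Algebra.commute_of_mem_adjoin_of_forall_mem_commute (hgen ▸ Algebra.mem_top) ?_).symm
  rintro _ ⟨j, rfl⟩
  exact ((mul_pow_eq_smul_pow_mul (hx j i) N).trans (by rw [hq, one_smul])).symm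

theorem mul_orderedMonomial [DecidableEq ι] (hx : ∀ i j, x i * x j = q i j • (x j * x i))
    {l : List ι} (hl : l.Nodup) {j : ι} (hj : j ∈ l) (a : ι → ℕ) :
    ∃ c : R, x j * orderedMonomial x l a = c • orderedMonomial x l (update a j (a j + 1)) := by
  induction l with
  | nil => cases hj
  | cons i l ih =>
    obtain ⟨hil, hl⟩ := List.nodup_cons.mp hl
    by_cases hij : j = i
    · subst hij
      refine ⟨1, ?_⟩
      rw [one_smul, orderedMonomial_cons, orderedMonomial_cons,
        orderedMonomial_update_of_notMem hil, update_self, pow_succ', mul_assoc]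
    · obtain ⟨c, hc⟩ := ih hl (List.mem_of_ne_of_mem hij hj)
      refine ⟨q j i ^ a i * c, ?_⟩
      rw [orderedMonomial_cons, orderedMonomial_cons, update_of_ne (Ne.symm hij), ← mul_assoc,
        mul_pow_eq_smul_pow_mul (hx j i), smul_mul_assoc, mul_assoc, hc, mul_smul_comm, smul_smul]

theorem span_range_orderedMonomial_eq_top [DecidableEq ι]
    (hx : ∀ i j, x i * x j = q i j • (x j * x i)) (hgen : Algebra.adjoin R (Set.range x) = ⊤)
    {l : List ι} (hl : l.Nodup) (hmem : ∀ i, i ∈ l) :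
    Submodule.span R (Set.range (orderedMonomial x l)) = ⊤ := by
  set S := Submodule.span R (Set.range (orderedMonomial x l))
  have hmul : ∀ j, ∀ y ∈ S, x j * y ∈ S := fun j y hy =>
    (Submodule.map_span_le (LinearMap.mulLeft R (x j)) _ S).mpr (by
      rintro _ ⟨a, rfl⟩
      obtain ⟨c, hc⟩ := mul_orderedMonomial hx hl (hmem j) a
      rw [LinearMap.mulLeft_apply, hc]
      exact S.smul_mem c (Submodule.subset_span ⟨_, rfl⟩)) (Submodule.mem_map_of_mem hy)
  rw [eq_top_iff, ← Algebra.top_toSubmodule, ← hgen, Algebra.adjoin_eq_span,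
    Submodule.span_le]
  intro y hy
  induction hy using Submonoid.closure_induction_left with
  | one => exact orderedMonomial_zero (x := x) l ▸ Submodule.subset_span ⟨0, rfl⟩
  | mul_left _ hz _ _ ih =>
    obtain ⟨j, rfl⟩ := hz
    exact hmul j _ ih

theorem module_finite_center_of_skewCommute [Finite ι]
    (hx : ∀ i j, x i * x j = q i j • (x j * x i)) (hgen : Algebra.adjoin R (Set.range x) = ⊤)
    {N : ℕ} (hN : 0 < N) (hq : ∀ i j, q i j ^ N = 1) :
    Module.Finite (Subalgebra.center R A) A := by
  classical
  have := Fintype.ofFinite ι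
  set l := (Finset.univ : Finset ι).toList
  have hmem : ∀ i, i ∈ l := by simp [l]
  set T := Submodule.span (Subalgebra.center R A)
    (Set.range fun b : ι → Fin N => orderedMonomial x l fun i => b i)
  suffices Submodule.span R (Set.range (orderedMonomial x l)) ≤ T.restrictScalars R by
    refine ⟨Submodule.fg_def.mpr ⟨_, Set.finite_range _, eq_top_iff.mpr fun y _ => this ?_⟩⟩
    rw [span_range_orderedMonomial_eq_top hx hgen (Finset.nodup_toList _) hmem]
    trivial
  rw [Submodule.span_le]
  rintro _ ⟨a, rfl⟩
  obtain ⟨c, hc, hca⟩ := exists_mem_center_orderedMonomial_eq_mul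
    (fun i _ => pow_mem_center_of_skewCommute hx hgen hq i) a
  rw [hca]
  exact T.smul_mem ⟨c, hc⟩ (Submodule.subset_span ⟨fun i => ⟨a i % N, Nat.mod_lt _ hN⟩, rfl⟩)

end SkewCommuting

namespace QuantumPolyRing

variable {n : ℕ} (Q : Fin (n + 1) → Fin (n + 1) → ℂ)

def X (i : Fin (n + 1)) : QuantumPolyRing Q :=
  RingQuot.mkAlgHom ℂ (QPRel Q) (FreeAlgebra.ι ℂ i)

theorem X_mul_X (i j : Fin (n + 1)) : X Q i * X Q j = Q i j • (X Q j * X Q i) := by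
  simpa only [X, map_mul, map_smul] using RingQuot.mkAlgHom_rel ℂ (QPRel.rel (Q := Q) i j)

theorem adjoin_range_X : Algebra.adjoin ℂ (Set.range (X Q)) = ⊤ := by
  change Algebra.adjoin ℂ (Set.range (RingQuot.mkAlgHom ℂ (QPRel Q) ∘ FreeAlgebra.ι ℂ)) = ⊤
  rw [Set.range_comp, ← AlgHom.map_adjoin, FreeAlgebra.adjoin_range_ι, Algebra.map_top,
    AlgHom.range_eq_top]
  exact RingQuot.mkAlgHom_surjective ℂ (QPRel Q)

end QuantumPolyRing

theorem quantumPolyRing_finite_over_center_general (n : ℕ)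
    (Q : Fin (n + 1) → Fin (n + 1) → ℂ)
    (hroot : ∀ i j, ∃ k : ℕ, 0 < k ∧ Q i j ^ k = 1) :
    Module.Finite (Subalgebra.center ℂ (QuantumPolyRing Q)) (QuantumPolyRing Q) := by
  obtain ⟨N, hN, hQN⟩ := exists_pos_forall_pow_eq_one (z := uncurry Q) fun p => hroot p.1 p.2
  exact module_finite_center_of_skewCommute (QuantumPolyRing.X_mul_X Q)
    (QuantumPolyRing.adjoin_range_X Q) hN fun i j => hQN (i, j)

theorem quantumPolyRing_finite_over_center (n : ℕ)
    (Q : Fin (n + 1) → Fin (n + 1) → ℂ)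
    (hdiag : ∀ i, Q i i = 1) (hinv : ∀ i j, Q i j * Q j i = 1)
    (hroot : ∀ i j, ∃ k : ℕ, 0 < k ∧ Q i j ^ k = 1) :
    Module.Finite (Subalgebra.center ℂ (QuantumPolyRing Q)) (QuantumPolyRing Q) :=
  quantumPolyRing_finite_over_center_general n Q hroot
end
end

section
/- Each of the following three operations on matrices in Matrix (Fin 5) (Fin 5) (ZMod 5) preserves both the property of being a quantum Fermat parameter matrix and the property of being generic: (1) scaling N ↦ u • N by a unit u ∈ (ZMod 5)ˣ; (2) simultaneous permutation N ↦ ((i,j) ↦ N (σ i) (σ j)) by a permutation σ of Fin 5; (3) the twist N ↦ ((i,j) ↦ N i j + a i − a j) by any function a : Fin 5 → ZMod 5. -/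
open scoped BigOperators

/-- `N` is a quantum Fermat parameter matrix: zero diagonal, skew-symmetric, and the
row sums are independent of the row (i.e. `(1,1,1,1,1)` is an eigenvector of `N`). -/
def IsQFParam (N : Matrix (Fin 5) (Fin 5) (ZMod 5)) : Prop :=
  (∀ i, N i i = 0) ∧ (∀ i j, N j i = - N i j) ∧
    (∀ i i', ∑ j, N i j = ∑ j, N i' j)

/-- `N` is generic: `N i j + N j k ≠ N i k` for all pairwise distinct `i, j, k`. -/
def IsGeneric (N : Matrix (Fin 5) (Fin 5) (ZMod 5)) : Prop :=
  ∀ i j k : Fin 5, i ≠ j → j ≠ k → i ≠ k → N i j + N j k ≠ N i k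

/-!
The twist `N i j + a i - a j` adds a coboundary, which cancels in `N i j + N j k - N i k` and
keeps the diagonal zero and the matrix skew-symmetric; it shifts the `i`-th row sum by
`5 • a i - ∑ j, a j`, which is independent of `i` because `5 = 0` in `ZMod 5`. Scaling by a
unit and simultaneous permutation are immediate.
-/

def twist (N : Matrix (Fin 5) (Fin 5) (ZMod 5)) (a : Fin 5 → ZMod 5) :
    Matrix (Fin 5) (Fin 5) (ZMod 5) :=
  Matrix.of fun i j => N i j + a i - a j

lemma sum_twist_row (N : Matrix (Fin 5) (Fin 5) (ZMod 5)) (a : Fin 5 → ZMod 5) (i : Fin 5) :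
    ∑ j, twist N a i j = ∑ j, N i j - ∑ j, a j := by
  have hfive : (5 : ZMod 5) = 0 := rfl
  simp only [twist, Matrix.of_apply, Finset.sum_sub_distrib, Finset.sum_add_distrib,
    Finset.sum_const, Finset.card_univ, Fintype.card_fin, nsmul_eq_mul, Nat.cast_ofNat, hfive,
    zero_mul, add_zero]

namespace IsQFParam

variable {N : Matrix (Fin 5) (Fin 5) (ZMod 5)}

lemma smul (hN : IsQFParam N) (c : ZMod 5) : IsQFParam (c • N) := by
  obtain ⟨hdiag, hskew, hrow⟩ := hN
  refine ⟨fun i => ?_, fun i j => ?_, fun i i' => ?_⟩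
  · simp [hdiag i]
  · simp [hskew i j]
  · simp only [Matrix.smul_apply, smul_eq_mul, ← Finset.mul_sum, hrow i i']

lemma submatrix (hN : IsQFParam N) (σ : Equiv.Perm (Fin 5)) : IsQFParam (N.submatrix σ σ) := by
  obtain ⟨hdiag, hskew, hrow⟩ := hN
  refine ⟨fun i => hdiag (σ i), fun i j => hskew (σ i) (σ j), fun i i' => ?_⟩
  simp only [Matrix.submatrix_apply, Equiv.sum_comp σ (N (σ _)), hrow (σ i) (σ i')]

lemma twist (hN : IsQFParam N) (a : Fin 5 → ZMod 5) : IsQFParam (twist N a) := by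
  obtain ⟨hdiag, hskew, hrow⟩ := hN
  refine ⟨fun i => ?_, fun i j => ?_, fun i i' => ?_⟩
  · simp [_root_.twist, hdiag i]
  · simp only [_root_.twist, Matrix.of_apply, hskew i j]
    ring
  · rw [sum_twist_row, sum_twist_row, hrow i i']

end IsQFParam

namespace IsGeneric

variable {N : Matrix (Fin 5) (Fin 5) (ZMod 5)}

lemma smul (hN : IsGeneric N) (u : (ZMod 5)ˣ) : IsGeneric ((u : ZMod 5) • N) := by
  intro i j k hij hjk hik h
  simp only [Matrix.smul_apply, smul_eq_mul, ← mul_add] at h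
  exact hN i j k hij hjk hik ((Units.mul_right_inj u).mp h)

lemma submatrix (hN : IsGeneric N) (σ : Equiv.Perm (Fin 5)) : IsGeneric (N.submatrix σ σ) :=
  fun i j k hij hjk hik =>
    hN (σ i) (σ j) (σ k) (σ.injective.ne hij) (σ.injective.ne hjk) (σ.injective.ne hik)

lemma twist (hN : IsGeneric N) (a : Fin 5 → ZMod 5) : IsGeneric (twist N a) := by
  intro i j k hij hjk hik h
  simp only [_root_.twist, Matrix.of_apply] at h
  exact hN i j k hij hjk hik (by linear_combination h)

end IsGeneric

theorem actions_preserve_QFParam_and_generic :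
    (∀ (u : (ZMod 5)ˣ) (N : Matrix (Fin 5) (Fin 5) (ZMod 5)),
      (IsQFParam N → IsQFParam (Matrix.of fun i j => (u : ZMod 5) * N i j)) ∧
      (IsGeneric N → IsGeneric (Matrix.of fun i j => (u : ZMod 5) * N i j))) ∧
    (∀ (σ : Equiv.Perm (Fin 5)) (N : Matrix (Fin 5) (Fin 5) (ZMod 5)),
      (IsQFParam N → IsQFParam (Matrix.of fun i j => N (σ i) (σ j))) ∧
      (IsGeneric N → IsGeneric (Matrix.of fun i j => N (σ i) (σ j)))) ∧
    (∀ (a : Fin 5 → ZMod 5) (N : Matrix (Fin 5) (Fin 5) (ZMod 5)),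
      (IsQFParam N → IsQFParam (Matrix.of fun i j => N i j + a i - a j)) ∧
      (IsGeneric N → IsGeneric (Matrix.of fun i j => N i j + a i - a j))) :=
  ⟨fun u _ => ⟨fun h => h.smul u, fun h => h.smul u⟩,
    fun σ _ => ⟨fun h => h.submatrix σ, fun h => h.submatrix σ⟩,
    fun a _ => ⟨fun h => h.twist a, fun h => h.twist a⟩⟩
end

section
/- Assume that ∏_{j=0}^{4} q_{ij} = 1 for every i (equivalently, ∑_j N i j = 0 in ZMod 5 for every i). Then for every tuple a = (a_0,…,a_4) ∈ {0,1,2,3,4}^5 whose sum a_0 + ⋯ + a_4 is divisible by 5, one has the equality of complex numbers ∏_{i>j} q_{ij}^{a_i (4 − a_j)} = ∏_{i>j} q_{ij}^{(4 − a_i) a_j}. (This is the symmetry of the Frobenius pairing on the quantum Fermat quintic algebra: the pairing q_{a, 4−a} = q_{4−a, a} for all a in the index set I, where q_{a,b} = ∏_{i>j} q_{ij}^{a_i b_j}.) -/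
open scoped BigOperators

noncomputable section

/-- The quantum parameter `q_{ij} = q^{(N i j).val}`. -/
def qparam (q : ℂ) (N : Fin 5 → Fin 5 → ZMod 5) (i j : Fin 5) : ℂ :=
  q ^ (N i j).val

/-!
Both sides are powers of `q`, so it suffices to compare exponents modulo `5`. Since
`a_i (4 - a_j) - (4 - a_i) a_j = 4 (a_i - a_j)`, the difference of the exponents is
`4 ∑_{i>j} N_ij (a_i - a_j)`, and skew-symmetry of `N` turns this sum into
`∑_i a_i ∑_j N_ij`, which vanishes because every row of `N` sums to zero.
-/

open Finset

theorem sum_sum_eq_sum_sum_lt_add_sum_diag {ι M : Type*} [Fintype ι] [LinearOrder ι]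
    [AddCommMonoid M] (g : ι → ι → M) :
    ∑ i, ∑ j, g i j = ∑ i, ∑ j ∈ univ.filter (· < i), (g i j + g j i) + ∑ i, g i i := by
  have hsplit : ∀ i, ∑ j, g i j =
      ∑ j ∈ univ.filter (· < i), g i j + g i i + ∑ j ∈ univ.filter (i < ·), g i j := by
    intro i
    have hge : univ.filter (fun j => ¬j < i) = insert i (univ.filter (i < ·)) := by
      ext j; simp [not_lt, le_iff_eq_or_lt, eq_comm]
    rw [← sum_filter_add_sum_filter_not univ (· < i), hge, sum_insert (by simp), add_assoc]
  have hswap : ∑ i, ∑ j ∈ univ.filter (i < ·), g i j = ∑ i, ∑ j ∈ univ.filter (· < i), g j i :=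
    sum_comm' (by simp)
  simp only [hsplit, sum_add_distrib, hswap]
  abel

theorem sum_sum_lt_mul_sub_eq_sum_mul_sum {ι R : Type*} [Fintype ι] [LinearOrder ι] [CommRing R]
    (N : ι → ι → R) (hdiag : ∀ i, N i i = 0) (hskew : ∀ i j, N j i = -N i j) (x : ι → R) :
    ∑ i, ∑ j ∈ univ.filter (· < i), N i j * (x i - x j) = ∑ i, x i * ∑ j, N i j := by
  simp only [mul_sum, sum_sum_eq_sum_sum_lt_add_sum_diag (fun i j => x i * N i j), hdiag,
    mul_zero, sum_const_zero, add_zero]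
  refine sum_congr rfl fun i _ => sum_congr rfl fun j _ => ?_
  rw [hskew]
  ring

theorem prod_qparam_pow (q : ℂ) (N : Fin 5 → Fin 5 → ZMod 5) (f : Fin 5 → Fin 5 → ℕ) :
    ∏ i, ∏ j ∈ univ.filter (· < i), qparam q N i j ^ f i j =
      q ^ ∑ i, ∑ j ∈ univ.filter (· < i), (N i j).val * f i j := by
  simp only [qparam, ← pow_mul, prod_pow_eq_pow_sum]

theorem frobenius_pairing_symmetric_general (q : ℂ) (hq : IsPrimitiveRoot q 5)
    (N : Fin 5 → Fin 5 → ZMod 5) (hdiag : ∀ i, N i i = 0)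
    (hskew : ∀ i j, N j i = - N i j)
    (hsum : ∀ i : Fin 5, ∑ j : Fin 5, N i j = 0)
    (a : Fin 5 → Fin 5) :
    ∏ i : Fin 5, ∏ j ∈ Finset.univ.filter (fun j : Fin 5 => j < i),
        qparam q N i j ^ ((a i).val * (4 - (a j).val)) =
      ∏ i : Fin 5, ∏ j ∈ Finset.univ.filter (fun j : Fin 5 => j < i),
        qparam q N i j ^ ((4 - (a i).val) * (a j).val) := by
  rw [prod_qparam_pow, prod_qparam_pow]
  refine pow_eq_pow_of_modEq ?_ hq.pow_eq_one
  rw [← ZMod.natCast_eq_natCast_iff, ← sub_eq_zero]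
  have hcast : ∀ k : Fin 5, ((4 - (a k).val : ℕ) : ZMod 5) = 4 - (a k).val := fun k => by
    rw [Nat.cast_sub (Nat.le_of_lt_succ (a k).isLt), Nat.cast_ofNat]
  push_cast [hcast, ZMod.natCast_zmod_val]
  calc _ = 4 * ∑ i, ∑ j ∈ univ.filter (· < i), N i j * ((a i).val - (a j).val : ZMod 5) := by
        simp only [mul_sum, ← sum_sub_distrib]
        refine sum_congr rfl fun i _ => sum_congr rfl fun j _ => ?_
        ring
    _ = 0 := by simp [sum_sum_lt_mul_sub_eq_sum_mul_sum N hdiag hskew, hsum]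

theorem frobenius_pairing_symmetric (q : ℂ) (hq : IsPrimitiveRoot q 5)
    (N : Fin 5 → Fin 5 → ZMod 5) (hdiag : ∀ i, N i i = 0)
    (hskew : ∀ i j, N j i = - N i j)
    (hsum : ∀ i : Fin 5, ∑ j : Fin 5, N i j = 0)
    (a : Fin 5 → Fin 5) (ha : 5 ∣ ∑ i : Fin 5, (a i).val) :
    ∏ i : Fin 5, ∏ j ∈ Finset.univ.filter (fun j : Fin 5 => j < i),
        qparam q N i j ^ ((a i).val * (4 - (a j).val)) =
      ∏ i : Fin 5, ∏ j ∈ Finset.univ.filter (fun j : Fin 5 => j < i),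
        qparam q N i j ^ ((4 - (a i).val) * (a j).val) :=
  frobenius_pairing_symmetric_general q hq N hdiag hskew hsum a
end
end
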